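/- Let a, b be natural numbers with a ≥ 2 and b ≥ 2, and let A, B ∈ SL₄(ℤ) be the 4×4 matrices with A having 1's on the diagonal, a in each entry (i, i+1) of the superdiagonal, and 0 elsewhere, and B having 1's on the diagonal, b in each entry (i+1, i) of the subdiagonal, and 0 elsewhere. Then for every integer l ≥ 6, the matrices A^l and B^l generate a free subgroup of rank 2 of SL₄(ℤ); that is, the group homomorphism from the free group on two generators to SL₄(ℤ) sending the two generators to A^l and B^l respectively is injective. -/

import Mathlib

/-- The `n×n` matrix with `1`'s on the diagonal, `a` in each superdiagonal entry `(i, i+1)`,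
and `0` elsewhere. -/
def upperA (R : Type*) [CommRing R] (n : ℕ) (a : R) : Matrix (Fin n) (Fin n) R :=
  Matrix.of fun i j => if (i : ℕ) = (j : ℕ) then 1 else if (j : ℕ) = (i : ℕ) + 1 then a else 0

/-- The `n×n` matrix with `1`'s on the diagonal, `b` in each subdiagonal entry `(i+1, i)`,
and `0` elsewhere. -/
def lowerB (R : Type*) [CommRing R] (n : ℕ) (b : R) : Matrix (Fin n) (Fin n) R :=
  Matrix.of fun i j => if (i : ℕ) = (j : ℕ) then 1 else if (i : ℕ) = (j : ℕ) + 1 then b else 0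

theorem upperA_det (R : Type*) [CommRing R] (n : ℕ) (a : R) : (upperA R n a).det = 1 := by
  rw [Matrix.det_of_upperTriangular]
  · simp [upperA]
  · intro i j hij
    have h : (j : ℕ) < (i : ℕ) := hij
    simp only [upperA, Matrix.of_apply]
    split_ifs with h1 h2
    · exfalso; omega
    · exfalso; omega
    · rfl

theorem lowerB_det (R : Type*) [CommRing R] (n : ℕ) (b : R) : (lowerB R n b).det = 1 := by
  rw [Matrix.det_of_lowerTriangular]
  · simp [lowerB]
  · intro i j hij
    have h : (i : ℕ) < (j : ℕ) := hij
    simp only [lowerB, Matrix.of_apply]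
    split_ifs with h1 h2
    · exfalso; omega
    · exfalso; omega
    · rfl

/-- The matrix `upperA` as an element of `SL_n(ℤ)`. -/
def Agen (n : ℕ) (a : ℤ) : Matrix.SpecialLinearGroup (Fin n) ℤ :=
  ⟨upperA ℤ n a, upperA_det ℤ n a⟩

/-- The matrix `lowerB` as an element of `SL_n(ℤ)`. -/
def Bgen (n : ℕ) (b : ℤ) : Matrix.SpecialLinearGroup (Fin n) ℤ :=
  ⟨lowerB ℤ n b, lowerB_det ℤ n b⟩

/-- Entrywise reduction modulo `p`, as a group homomorphism `SL_n(ℤ) →* SL_n(ZMod p)`. -/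
def modpn (n p : ℕ) :
    Matrix.SpecialLinearGroup (Fin n) ℤ →* Matrix.SpecialLinearGroup (Fin n) (ZMod p) :=
  Matrix.SpecialLinearGroup.map (Int.castRingHom (ZMod p))

/-!
Ping-pong on `ℤ⁴`. Writing `A = 1 + aN` with `N` the nilpotent shift, `A ^ m` is the upper
unitriangular Toeplitz matrix with entries `m a`, `C(m,2) a²`, `C(m,3) a³`, for every `m : ℤ`.
For `|m| ≥ 6` the corner entry `C(m,3) a³` is at least twice `1 + |m a| + |C(m,2) a²|`, so `A ^ m`
sends every vector whose last coordinate dominates to one whose first coordinate dominates.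
Conjugation by the coordinate reversal, which lies in `SL₄(ℤ)`, turns `A` into `B` and swaps the
two cones, so the ping-pong lemma applies to `A ^ l` and `B ^ l`.
-/

open scoped Pointwise

theorem FreeGroup.injective_lift_of_zpow_ping_pong {ι G α : Type*} [Nontrivial ι] [Group G]
    [MulAction G α] (g : ι → G) (X : ι → Set α) (hX : ∀ i, (X i).Nonempty)
    (hdisj : Pairwise fun i j => Disjoint (X i) (X j))
    (hpp : Pairwise fun i j => ∀ n : ℤ, n ≠ 0 → g i ^ n • X j ⊆ X i) :
    Function.Injective (FreeGroup.lift g) := by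
  have hfactor : FreeGroup.lift g =
      (Monoid.CoprodI.lift fun i => FreeGroup.lift fun _ : Unit => g i).comp
        (@freeGroupEquivCoprodI ι).toMonoidHom := by
    ext i
    simp
  rw [hfactor, MonoidHom.coe_comp]
  refine Function.Injective.comp ?_ freeGroupEquivCoprodI.injective
  refine Monoid.CoprodI.lift_injective_of_ping_pong _ ?_ X hX hdisj fun i j hij => ?_
  · exact Or.inr ⟨Classical.arbitrary ι, (Cardinal.aleph0_le_mk _).trans' (by norm_num)⟩
  · refine FreeGroup.freeGroupUnitEquivInt.forall_congr_left.mpr fun n hn => ?_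
    have hn₀ : n ≠ 0 := by
      rintro rfl
      exact hn (by simp [FreeGroup.freeGroupUnitEquivInt])
    simpa [FreeGroup.freeGroupUnitEquivInt] using hpp hij n hn₀

theorem FreeGroup.injective_lift_pair_of_zpow_ping_pong {G α : Type*} [Group G] [MulAction G α]
    {g₀ g₁ : G} {X₀ X₁ : Set α} (hX₀ : X₀.Nonempty) (hX₁ : X₁.Nonempty) (hdisj : Disjoint X₀ X₁)
    (h₀ : ∀ n : ℤ, n ≠ 0 → g₀ ^ n • X₁ ⊆ X₀) (h₁ : ∀ n : ℤ, n ≠ 0 → g₁ ^ n • X₀ ⊆ X₁) :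
    Function.Injective (FreeGroup.lift ![g₀, g₁]) := by
  refine injective_lift_of_zpow_ping_pong _ ![X₀, X₁] (fun i => ?_) (fun i j hij => ?_)
    (fun i j hij => ?_) <;> fin_cases i
  all_goals try fin_cases j
  all_goals first
    | exact absurd rfl hij
    | assumption
    | exact hdisj.symm

section BinomialCoefficients
variable {R : Type*} [CommRing R] [BinomialRing R]

theorem two_mul_choose_two (r : R) : 2 * Ring.choose r 2 = r * (r - 1) := by
  have h := Ring.descPochhammer_eq_factorial_smul_choose r 2
  simp only [descPochhammer_succ_right, descPochhammer_zero, Polynomial.smeval_mul,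
    Polynomial.smeval_sub, Polynomial.smeval_X, Polynomial.smeval_natCast, Polynomial.smeval_one,
    pow_zero, pow_one, one_smul, Nat.factorial, nsmul_eq_mul] at h
  linear_combination -h

theorem six_mul_choose_three (r : R) : 6 * Ring.choose r 3 = r * (r - 1) * (r - 2) := by
  have h := Ring.descPochhammer_eq_factorial_smul_choose r 3
  simp only [descPochhammer_succ_right, descPochhammer_zero, Polynomial.smeval_mul,
    Polynomial.smeval_sub, Polynomial.smeval_X, Polynomial.smeval_natCast, Polynomial.smeval_one,
    pow_zero, pow_one, one_smul, Nat.factorial, nsmul_eq_mul] at h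
  linear_combination -h

theorem add_choose_two (r s : R) :
    Ring.choose (r + s) 2 = Ring.choose r 2 + r * s + Ring.choose s 2 := by
  rw [Ring.add_choose_eq 2 (Commute.all r s)]
  simp only [Finset.Nat.sum_antidiagonal_succ, Finset.Nat.antidiagonal_zero, Finset.sum_singleton,
    zero_add, Ring.choose_zero_right, Ring.choose_one_right]
  ring

theorem add_choose_three (r s : R) :
    Ring.choose (r + s) 3 =
      Ring.choose r 3 + Ring.choose r 2 * s + r * Ring.choose s 2 + Ring.choose s 3 := by
  rw [Ring.add_choose_eq 3 (Commute.all r s)]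
  simp only [Finset.Nat.sum_antidiagonal_succ, Finset.Nat.antidiagonal_zero, Finset.sum_singleton,
    zero_add, Ring.choose_zero_right, Ring.choose_one_right]
  ring

end BinomialCoefficients

section Toeplitz
variable {R : Type*}

def unitriangularToeplitz [Zero R] [One R] (c₁ c₂ c₃ : R) : Matrix (Fin 4) (Fin 4) R :=
  !![1, c₁, c₂, c₃; 0, 1, c₁, c₂; 0, 0, 1, c₁; 0, 0, 0, 1]

theorem unitriangularToeplitz_zero [Zero R] [One R] :
    unitriangularToeplitz (0 : R) 0 0 = 1 := by
  ext i j
  fin_cases i <;> fin_cases j <;> rfl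

variable [CommRing R]

theorem unitriangularToeplitz_mul (c₁ c₂ c₃ d₁ d₂ d₃ : R) :
    unitriangularToeplitz c₁ c₂ c₃ * unitriangularToeplitz d₁ d₂ d₃ =
      unitriangularToeplitz (c₁ + d₁) (c₂ + c₁ * d₁ + d₂) (c₃ + c₂ * d₁ + c₁ * d₂ + d₃) := by
  ext i j
  fin_cases i <;> fin_cases j <;>
    simp [unitriangularToeplitz, Matrix.mul_apply, Fin.sum_univ_four] <;> ring

theorem unitriangularToeplitz_mulVec (c₁ c₂ c₃ : R) (v : Fin 4 → R) :
    (unitriangularToeplitz c₁ c₂ c₃).mulVec v =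
      ![v 0 + c₁ * v 1 + c₂ * v 2 + c₃ * v 3, v 1 + c₁ * v 2 + c₂ * v 3, v 2 + c₁ * v 3, v 3] := by
  ext i
  fin_cases i <;> simp [unitriangularToeplitz, Matrix.mulVec, dotProduct, Fin.sum_univ_four]

theorem upperA_four (a : R) : upperA R 4 a = unitriangularToeplitz a 0 0 := by
  ext i j
  fin_cases i <;> fin_cases j <;> simp [upperA, unitriangularToeplitz]

end Toeplitz

section Dominance
variable {R : Type*} [CommRing R] [LinearOrder R] [IsStrictOrderedRing R]

def headDominant : Set (Fin 4 → R) := {v | |v 1| + |v 2| + |v 3| < |v 0|}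

def lastDominant : Set (Fin 4 → R) := {v | |v 0| + |v 1| + |v 2| < |v 3|}

theorem disjoint_headDominant_lastDominant :
    Disjoint (headDominant : Set (Fin 4 → R)) lastDominant := by
  refine Set.disjoint_left.mpr fun v hhead hlast => ?_
  simp only [headDominant, lastDominant, Set.mem_ofPred_eq] at hhead hlast
  linarith [abs_nonneg (v 1), abs_nonneg (v 2)]

theorem unitriangularToeplitz_mulVec_mem_headDominant {c₁ c₂ c₃ : R}
    (hc : 2 * (1 + |c₁| + |c₂|) ≤ |c₃|) {v : Fin 4 → R} (hv : v ∈ lastDominant) :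
    (unitriangularToeplitz c₁ c₂ c₃).mulVec v ∈ headDominant := by
  simp only [lastDominant, headDominant, Set.mem_ofPred_eq, unitriangularToeplitz_mulVec,
    Matrix.cons_val] at hv ⊢
  have h₁ : |v 1 + c₁ * v 2 + c₂ * v 3| ≤ |v 1| + |c₁| * |v 2| + |c₂| * |v 3| := by
    simpa only [abs_mul] using abs_add_three (v 1) (c₁ * v 2) (c₂ * v 3)
  have h₂ : |v 2 + c₁ * v 3| ≤ |v 2| + |c₁| * |v 3| := by
    simpa only [abs_mul] using abs_add_le (v 2) (c₁ * v 3)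
  have h₀ : |c₃| * |v 3| - (|v 0| + |c₁| * |v 1| + |c₂| * |v 2|) ≤
      |v 0 + c₁ * v 1 + c₂ * v 2 + c₃ * v 3| := by
    have h := abs_sub (v 0 + c₁ * v 1 + c₂ * v 2 + c₃ * v 3) (v 0 + c₁ * v 1 + c₂ * v 2)
    rw [add_sub_cancel_left, abs_mul] at h
    have := abs_add_three (v 0) (c₁ * v 1) (c₂ * v 2)
    simp only [abs_mul] at this
    linarith
  have hK : 0 < 1 + |c₁| + |c₂| := by positivity
  nlinarith [mul_le_mul_of_nonneg_right hc (abs_nonneg (v 3)), mul_lt_mul_of_pos_left hv hK,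
    abs_nonneg (v 0), abs_nonneg (v 1), abs_nonneg (v 2), abs_nonneg c₁, abs_nonneg c₂]

end Dominance

theorem two_mul_one_add_abs_le_abs_choose_three {a m : ℤ} (ha : 2 ≤ a) (hm : 6 ≤ |m|) :
    2 * (1 + |m * a| + |Ring.choose m 2 * a ^ 2|) ≤ |Ring.choose m 3 * a ^ 3| := by
  have hm₁ : 5 ≤ |m - 1| := by linarith [abs_sub_abs_le_abs_sub m 1, abs_one (α := ℤ)]
  have hm₂ : 4 ≤ |m - 2| := by linarith [abs_sub_abs_le_abs_sub m 2, abs_two (α := ℤ)]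
  have hC₂ : 5 * |m| ≤ 2 * |Ring.choose m 2| := by
    rw [← abs_two, ← abs_mul, two_mul_choose_two, abs_mul]
    nlinarith [abs_nonneg m]
  have hC₃ : 4 * |Ring.choose m 2| ≤ 3 * |Ring.choose m 3| := by
    have h : 3 * Ring.choose m 3 = Ring.choose m 2 * (m - 2) := by
      refine mul_left_cancel₀ two_ne_zero ?_
      linear_combination six_mul_choose_three m - (m - 2) * two_mul_choose_two m
    rw [← abs_of_pos (by norm_num : (0 : ℤ) < 3), ← abs_mul, h, abs_mul]
    nlinarith [abs_nonneg (Ring.choose m 2)]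
  rw [abs_mul, abs_mul, abs_mul, abs_pow, abs_pow, abs_of_pos (by linarith : 0 < a)]
  have hpos : 0 ≤ |Ring.choose m 2| * a ^ 2 := by positivity
  refine le_of_mul_le_mul_left ?_ (by norm_num : (0 : ℤ) < 3)
  calc 3 * (2 * (1 + |m| * a + |Ring.choose m 2| * a ^ 2))
      ≤ 8 * (|Ring.choose m 2| * a ^ 2) := by nlinarith
    _ ≤ 4 * |Ring.choose m 2| * a ^ 3 := by nlinarith
    _ ≤ 3 * (|Ring.choose m 3| * a ^ 3) := by
      nlinarith [mul_le_mul_of_nonneg_right hC₃ (by positivity : (0 : ℤ) ≤ a ^ 3)]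

theorem coe_Agen_four (a : ℤ) :
    (Agen 4 a : Matrix (Fin 4) (Fin 4) ℤ) = unitriangularToeplitz a 0 0 :=
  upperA_four a

theorem coe_Agen_zpow (a m : ℤ) :
    ((Agen 4 a ^ m : Matrix.SpecialLinearGroup (Fin 4) ℤ) : Matrix (Fin 4) (Fin 4) ℤ) =
      unitriangularToeplitz (m * a) (Ring.choose m 2 * a ^ 2) (Ring.choose m 3 * a ^ 3) := by
  let P (m : ℤ) : Matrix (Fin 4) (Fin 4) ℤ :=
    unitriangularToeplitz (m * a) (Ring.choose m 2 * a ^ 2) (Ring.choose m 3 * a ^ 3)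
  have P_add (m k : ℤ) : P (m + k) = P m * P k := by
    simp only [P, unitriangularToeplitz_mul, add_choose_two, add_choose_three]
    congr 1 <;> ring
  have P_zero : P 0 = 1 := by simp [P, unitriangularToeplitz_zero]
  have P_one : P 1 = Agen 4 a := by
    have h (k : ℕ) : Ring.choose (1 : ℤ) (k + 2) = 0 := by
      rw [← Nat.cast_one, Ring.choose_natCast, Nat.choose_eq_zero_of_lt (by omega), Nat.cast_zero]
    simp [P, h, coe_Agen_four]
  change _ = P m
  induction m using Int.induction_on with
  | zero => rw [zpow_zero, Matrix.SpecialLinearGroup.coe_one, P_zero]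
  | succ m ih => rw [zpow_add_one, Matrix.SpecialLinearGroup.coe_mul, ih, ← P_one, ← P_add]
  | pred m ih =>
    calc ((Agen 4 a ^ (-(m : ℤ) - 1) : Matrix.SpecialLinearGroup (Fin 4) ℤ) :
          Matrix (Fin 4) (Fin 4) ℤ)
        = ↑(Agen 4 a ^ (-(m : ℤ) - 1)) * (P 1 * P (-1)) := by
          rw [← P_add, add_neg_cancel, P_zero, mul_one]
      _ = ↑(Agen 4 a ^ (-(m : ℤ) - 1) * Agen 4 a) * P (-1) := by
          rw [P_one, Matrix.SpecialLinearGroup.coe_mul, mul_assoc]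
      _ = P (-(m : ℤ) - 1) := by
          rw [← zpow_add_one, sub_add_cancel, ih, ← P_add, sub_eq_add_neg]

theorem Agen_zpow_smul_lastDominant_subset {a m : ℤ} (ha : 2 ≤ a) (hm : 6 ≤ |m|) :
    Agen 4 a ^ m • (lastDominant : Set (Fin 4 → ℤ)) ⊆ headDominant := by
  refine Set.smul_set_subset_iff.mpr fun v hv => ?_
  rw [Matrix.SpecialLinearGroup.smul_def, Matrix.smul_eq_mulVec, coe_Agen_zpow]
  exact unitriangularToeplitz_mulVec_mem_headDominant
    (two_mul_one_add_abs_le_abs_choose_three ha hm) hv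

def reversalSL : Matrix.SpecialLinearGroup (Fin 4) ℤ :=
  ⟨!![0, 0, 0, 1; 0, 0, 1, 0; 0, 1, 0, 0; 1, 0, 0, 0], by
    simp [Matrix.det_succ_row_zero, Fin.sum_univ_succ, Fin.succAbove]⟩

theorem coe_reversalSL : (reversalSL : Matrix (Fin 4) (Fin 4) ℤ) =
    !![0, 0, 0, 1; 0, 0, 1, 0; 0, 1, 0, 0; 1, 0, 0, 0] := rfl

theorem reversalSL_smul (v : Fin 4 → ℤ) : reversalSL • v = ![v 3, v 2, v 1, v 0] := by
  rw [Matrix.SpecialLinearGroup.smul_def, Matrix.smul_eq_mulVec, coe_reversalSL]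
  ext i
  fin_cases i <;> simp [Matrix.mulVec, dotProduct, Fin.sum_univ_four]

theorem reversalSL_inv : reversalSL⁻¹ = reversalSL := by
  refine inv_eq_of_mul_eq_one_right (Subtype.ext ?_)
  rw [Matrix.SpecialLinearGroup.coe_mul, Matrix.SpecialLinearGroup.coe_one, coe_reversalSL]
  ext i j
  fin_cases i <;> fin_cases j <;> simp [Matrix.mul_apply, Fin.sum_univ_four]

theorem Bgen_eq_conj (b : ℤ) : Bgen 4 b = reversalSL * Agen 4 b * reversalSL⁻¹ := by
  refine Subtype.ext ?_
  rw [reversalSL_inv, Matrix.SpecialLinearGroup.coe_mul, Matrix.SpecialLinearGroup.coe_mul,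
    coe_reversalSL, coe_Agen_four]
  ext i j
  fin_cases i <;> fin_cases j <;>
    simp [Bgen, lowerB, unitriangularToeplitz, Matrix.mul_apply, Fin.sum_univ_four]

theorem reversalSL_smul_headDominant :
    reversalSL • (headDominant : Set (Fin 4 → ℤ)) = lastDominant := by
  ext v
  rw [Set.mem_smul_set_iff_inv_smul_mem, reversalSL_inv, reversalSL_smul]
  simp only [headDominant, lastDominant, Set.mem_ofPred_eq, Matrix.cons_val]
  constructor <;> intro h <;> linarith

theorem Bgen_zpow_smul_headDominant_subset {b m : ℤ} (hb : 2 ≤ b) (hm : 6 ≤ |m|) :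
    Bgen 4 b ^ m • (headDominant : Set (Fin 4 → ℤ)) ⊆ lastDominant := by
  rw [Bgen_eq_conj, conj_zpow, mul_smul, mul_smul, reversalSL_inv, reversalSL_smul_headDominant]
  exact (Set.smul_set_mono (Agen_zpow_smul_lastDominant_subset hb hm)).trans
    reversalSL_smul_headDominant.subset

/-- for natural numbers `a, b ≥ 2`, with `A, B ∈ SL₄(ℤ)` the matrices with
`1`'s on the diagonal and `a` on the superdiagonal (resp. `b` on the subdiagonal) and `0`
elsewhere, for every `l ≥ 6` the matrices `A^l` and `B^l` generate a free subgroup of rank 2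
of `SL₄(ℤ)`. -/
theorem sl4_free_powers (a b : ℕ) (ha : 2 ≤ a) (hb : 2 ≤ b) (l : ℕ) (hl : 6 ≤ l) :
    Function.Injective ⇑(FreeGroup.lift ![(Agen 4 (a : ℤ)) ^ l, (Bgen 4 (b : ℤ)) ^ l]) := by
  have hexp {n : ℤ} (hn : n ≠ 0) : 6 ≤ |(l : ℤ) * n| := by
    rw [abs_mul, Nat.abs_cast]
    nlinarith [Int.one_le_abs hn]
  refine FreeGroup.injective_lift_pair_of_zpow_ping_pong (X₀ := (headDominant : Set (Fin 4 → ℤ)))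
    ⟨![1, 0, 0, 0], by simp [headDominant]⟩ ⟨![0, 0, 0, 1], by simp [lastDominant]⟩
    disjoint_headDominant_lastDominant (fun n hn => ?_) (fun n hn => ?_)
  · rw [← zpow_natCast, ← zpow_mul]
    exact Agen_zpow_smul_lastDominant_subset (mod_cast ha) (hexp hn)
  · rw [← zpow_natCast, ← zpow_mul]
    exact Bgen_zpow_smul_headDominant_subset (mod_cast hb) (hexp hn)
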